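/- arXiv:0905.0458 — 3 statements merged into one kernel-verified Lean document; each statement's English description precedes it below -/
import Mathlib

section
/- A λI-term is strongly normalizable (every β-reduction sequence from it is finite) if and only if it is weakly normalizable (it β-reduces to some β-normal term). -/
set_option maxHeartbeats 1000000

/-- Untyped λ-terms in de Bruijn representation. -/
inductive Trm : Type
  | var : ℕ → Trm
  | app : Trm → Trm → Trm
  | lam : Trm → Trm
  deriving DecidableEq

namespace Trm

/-- The set of free variables of a term (as de Bruijn indices). -/
def fv : Trm → Set ℕ
  | var n => {n}
  | app u v => fv u ∪ fv v
  | lam u => {n | n + 1 ∈ fv u}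

/-- A term is closed if it has no free variables. -/
def Closed (t : Trm) : Prop := fv t = ∅

/-- λI-terms: abstraction is allowed only on variables occurring free in the body. -/
inductive IsLI : Trm → Prop
  | var (n : ℕ) : IsLI (var n)
  | app {u v : Trm} : IsLI u → IsLI v → IsLI (app u v)
  | lam {u : Trm} : IsLI u → 0 ∈ fv u → IsLI (lam u)

/-- Lifting of free variables ≥ d. -/
def lift (d : ℕ) : Trm → Trm
  | var n => if n < d then var n else var (n + 1)
  | app u v => app (lift d u) (lift d v)
  | lam u => lam (lift (d + 1) u)

def liftTimes (k : ℕ) (t : Trm) : Trm := (lift 0)^[k] t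

/-- Capture-avoiding substitution of the k-th free variable. -/
def subst : Trm → ℕ → Trm → Trm
  | var n, k, v => if n < k then var n else if n = k then liftTimes k v else var (n - 1)
  | app a b, k, v => app (subst a k v) (subst b k v)
  | lam a, k, v => lam (subst a (k + 1) v)

end Trm

/-- One step of β-reduction. -/
inductive Beta : Trm → Trm → Prop
  | beta {u v : Trm} : Beta (.app (.lam u) v) (u.subst 0 v)
  | appL {u u' v : Trm} : Beta u u' → Beta (.app u v) (.app u' v)
  | appR {u v v' : Trm} : Beta v v' → Beta (.app u v) (.app u v')
  | lam {u u' : Trm} : Beta u u' → Beta (.lam u) (.lam u')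

/-- One step of η-reduction: λx (u)x → u when x ∉ Fv(u). -/
inductive Eta : Trm → Trm → Prop
  | eta (u : Trm) : Eta (.lam (.app (u.lift 0) (.var 0))) u
  | appL {u u' v : Trm} : Eta u u' → Eta (.app u v) (.app u' v)
  | appR {u v v' : Trm} : Eta v v' → Eta (.app u v) (.app u v')
  | lam {u u' : Trm} : Eta u u' → Eta (.lam u) (.lam u')

/-- β-reduction (reflexive-transitive closure). -/
def BetaStar : Trm → Trm → Prop := Relation.ReflTransGen Beta

/-- βη-reduction (reflexive-transitive closure of the union of β and η). -/
def BetaEtaStar : Trm → Trm → Prop := Relation.ReflTransGen (fun a b => Beta a b ∨ Eta a b)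

/-- η-reduction (reflexive-transitive closure). -/
def EtaStar : Trm → Trm → Prop := Relation.ReflTransGen Eta

/-- A term is β-normal iff it contains no β-redex. -/
def BetaNormal (t : Trm) : Prop := ∀ u, ¬ Beta t u

/-- A term is βη-normal iff it contains neither a β-redex nor an η-redex. -/
def BetaEtaNormal (t : Trm) : Prop := ∀ u, ¬ Beta t u ∧ ¬ Eta t u

/-- A term is strongly normalizable iff every β-reduction sequence from it is finite. -/
def StronglyNormalizable (t : Trm) : Prop :=
  ¬ ∃ f : ℕ → Trm, f 0 = t ∧ ∀ n, Beta (f n) (f (n + 1))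

/-!
A strongly normalizing term reaches a normal form by reducing while it can. Conversely,
standardize a reduction `t →β* u` to normal form and induct on the standard reduction: `t`
head-reduces to a variable, an abstraction or an application `M₁ M₂` whose parts standard-reduce
to normal forms and so are strongly normalizing. The application is strongly normalizing as well,
because `M₁` never reduces to an abstraction: head reduction is deterministic and the head normal
form of `M₁` is not one. Finally, strong normalization is preserved by head expansion in λI: a
λI-redex `(λx P) Q` does not erase `Q`, so every other step out of `(λx P) Q …` turns into a
nonempty reduction of its head reduct.
-/
open Relation

namespace Trm

section Substitution

lemma lift_var_of_lt {n d : ℕ} (h : n < d) : lift d (var n) = var n := by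
  simp [lift, h]

lemma lift_var_of_le {n d : ℕ} (h : d ≤ n) : lift d (var n) = var (n + 1) := by
  simp [lift, not_lt.mpr h]

lemma subst_var_of_lt {n k : ℕ} (v : Trm) (h : n < k) : subst (var n) k v = var n := by
  simp [subst, h]

lemma subst_var_self (k : ℕ) (v : Trm) : subst (var k) k v = liftTimes k v := by
  simp [subst]

lemma subst_var_of_gt {n k : ℕ} (v : Trm) (h : k < n) : subst (var n) k v = var (n - 1) := by
  rw [subst, if_neg (by omega), if_neg (by omega)]

lemma liftTimes_succ (k : ℕ) (t : Trm) : liftTimes (k + 1) t = lift 0 (liftTimes k t) :=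
  Function.iterate_succ_apply' _ _ _

lemma lift_lift_of_le {i j : ℕ} (h : i ≤ j) (t : Trm) :
    lift i (lift j t) = lift (j + 1) (lift i t) := by
  induction t generalizing i j with
  | var n =>
    simp only [lift]
    split_ifs <;> simp only [lift] <;> split_ifs <;> first | rfl | omega
  | app a b iha ihb => simp [lift, iha h, ihb h]
  | lam a ih => simp [lift, ih (by omega : i + 1 ≤ j + 1)]

lemma lift_liftTimes_of_le {d j : ℕ} (h : d ≤ j) (v : Trm) :
    lift d (liftTimes j v) = liftTimes (j + 1) v := by
  induction j generalizing d with
  | zero => rw [Nat.le_zero.mp h, ← liftTimes_succ]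
  | succ j ih =>
    rcases d with _ | d
    · rw [← liftTimes_succ]
    · rw [liftTimes_succ, ← lift_lift_of_le (Nat.zero_le d), ih (by omega), ← liftTimes_succ]

lemma lift_liftTimes_of_ge {d j : ℕ} (h : j ≤ d) (v : Trm) :
    lift d (liftTimes j v) = liftTimes j (lift (d - j) v) := by
  induction j generalizing d with
  | zero => rfl
  | succ j ih =>
    obtain ⟨d, rfl⟩ : ∃ d', d = d' + 1 := ⟨d - 1, by omega⟩
    rw [Nat.add_sub_add_right, liftTimes_succ, ← lift_lift_of_le (Nat.zero_le d), ih (by omega),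
      ← liftTimes_succ]

lemma subst_lift_self (d : ℕ) (u t : Trm) : subst (lift d t) d u = t := by
  induction t generalizing d with
  | var n =>
    rcases lt_or_ge n d with h | h
    · rw [lift_var_of_lt h, subst_var_of_lt _ h]
    · rw [lift_var_of_le h, subst_var_of_gt _ (by omega), Nat.add_sub_cancel]
  | app a b iha ihb => simp [lift, subst, iha, ihb]
  | lam a ih => simp [lift, subst, ih]

lemma subst_lift_of_le {d j : ℕ} (h : d ≤ j) (v t : Trm) :
    subst (lift d t) (j + 1) v = lift d (subst t j v) := by
  induction t generalizing d j with
  | var n =>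
    rcases lt_or_ge n d with h1 | h1
    · rw [lift_var_of_lt h1, subst_var_of_lt _ (by omega), subst_var_of_lt _ (by omega),
        lift_var_of_lt h1]
    · rcases lt_trichotomy n j with h2 | rfl | h2
      · rw [lift_var_of_le h1, subst_var_of_lt _ (by omega), subst_var_of_lt _ h2,
          lift_var_of_le h1]
      · rw [lift_var_of_le h1, subst_var_self, subst_var_self, lift_liftTimes_of_le h]
      · rw [lift_var_of_le h1, subst_var_of_gt _ (by omega), subst_var_of_gt _ h2,
          lift_var_of_le (by omega), Nat.add_sub_cancel, Nat.sub_add_cancel (by omega)]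
  | app a b iha ihb => simp [lift, subst, iha h, ihb h]
  | lam a ih => simp [lift, subst, ih (by omega : d + 1 ≤ j + 1)]

lemma subst_liftTimes_of_le {i j : ℕ} (h : i ≤ j) (w v : Trm) :
    subst (liftTimes i w) j v = liftTimes i (subst w (j - i) v) := by
  induction i generalizing j with
  | zero => rfl
  | succ i ih =>
    obtain ⟨j, rfl⟩ : ∃ j', j = j' + 1 := ⟨j - 1, by omega⟩
    rw [Nat.add_sub_add_right, liftTimes_succ, subst_lift_of_le (Nat.zero_le j), ih (by omega),
      ← liftTimes_succ]

lemma lift_subst_of_le {j d : ℕ} (h : j ≤ d) (w t : Trm) :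
    lift d (subst t j w) = subst (lift (d + 1) t) j (lift (d - j) w) := by
  induction t generalizing j d with
  | var n =>
    rcases lt_trichotomy n j with h1 | rfl | h1
    · rw [subst_var_of_lt _ h1, lift_var_of_lt (by omega), lift_var_of_lt (by omega),
        subst_var_of_lt _ h1]
    · rw [subst_var_self, lift_var_of_lt (by omega), subst_var_self, lift_liftTimes_of_ge h]
    · rcases lt_or_ge n (d + 1) with h2 | h2
      · rw [subst_var_of_gt _ h1, lift_var_of_lt (by omega), lift_var_of_lt h2,
          subst_var_of_gt _ h1]
      · rw [subst_var_of_gt _ h1, lift_var_of_le (by omega), lift_var_of_le h2,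
          subst_var_of_gt _ (by omega), Nat.add_sub_cancel, Nat.sub_add_cancel (by omega)]
  | app a b iha ihb => simp [lift, subst, iha h, ihb h]
  | lam a ih => simp [lift, subst, ih (by omega : j + 1 ≤ d + 1)]

lemma subst_subst_of_le {i j : ℕ} (h : i ≤ j) (w v t : Trm) :
    subst (subst t i w) j v = subst (subst t (j + 1) v) i (subst w (j - i) v) := by
  induction t generalizing i j with
  | var n =>
    rcases lt_trichotomy n i with h1 | rfl | h1
    · rw [subst_var_of_lt _ h1, subst_var_of_lt _ (by omega), subst_var_of_lt _ (by omega),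
        subst_var_of_lt _ h1]
    · rw [subst_var_self, subst_liftTimes_of_le h, subst_var_of_lt _ (by omega), subst_var_self]
    · rcases lt_trichotomy n (j + 1) with h2 | rfl | h2
      · rw [subst_var_of_gt _ h1, subst_var_of_lt _ (by omega), subst_var_of_lt _ h2,
          subst_var_of_gt _ h1]
      · rw [subst_var_of_gt _ h1, Nat.add_sub_cancel, subst_var_self, subst_var_self,
          ← lift_liftTimes_of_le h, subst_lift_self]
      · rw [subst_var_of_gt _ h1, subst_var_of_gt _ (by omega), subst_var_of_gt _ h2,
          subst_var_of_gt _ (by omega)]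
  | app a b iha ihb => simp [subst, iha h, ihb h]
  | lam a ih => simpa [subst] using ih (by omega : i + 1 ≤ j + 1)

lemma subst_subst_zero (k : ℕ) (w v t : Trm) :
    subst (subst t 0 w) k v = subst (subst t (k + 1) v) 0 (subst w k v) := by
  simpa using subst_subst_of_le (Nat.zero_le k) w v t

lemma lift_subst_zero (d : ℕ) (w t : Trm) :
    lift d (subst t 0 w) = subst (lift (d + 1) t) 0 (lift d w) := by
  simpa using lift_subst_of_le (Nat.zero_le d) w t

end Substitution

end Trm

namespace Trm

section FreeVariables

lemma mem_fv_lift {d n : ℕ} (t : Trm) :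
    n ∈ fv (lift d t) ↔ (n < d ∧ n ∈ fv t) ∨ (d < n ∧ n - 1 ∈ fv t) := by
  induction t generalizing d n with
  | var j =>
    rcases lt_or_ge j d with h | h
    · rw [lift_var_of_lt h]; simp only [fv, Set.mem_singleton_iff]; omega
    · rw [lift_var_of_le h]; simp only [fv, Set.mem_singleton_iff]; omega
  | app a b iha ihb =>
    simp only [lift, fv, Set.mem_union, iha, ihb]
    tauto
  | lam a ih =>
    simp only [lift, fv, Set.mem_ofPred_eq, ih]
    grind

lemma mem_fv_liftTimes {k n : ℕ} (v : Trm) :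
    n ∈ fv (liftTimes k v) ↔ ∃ m ∈ fv v, n = m + k := by
  induction k generalizing n with
  | zero => simp [liftTimes]
  | succ k ih =>
    rw [liftTimes_succ, mem_fv_lift, ih, ih]
    grind

lemma mem_fv_subst {k n : ℕ} (v t : Trm) : n ∈ fv (subst t k v) ↔
    (n < k ∧ n ∈ fv t) ∨ (k ≤ n ∧ n + 1 ∈ fv t) ∨ (k ∈ fv t ∧ ∃ m ∈ fv v, n = m + k) := by
  induction t generalizing k n with
  | var j =>
    rcases lt_trichotomy j k with h | rfl | h
    · rw [subst_var_of_lt _ h]; simp only [fv, Set.mem_singleton_iff]; omega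
    · rw [subst_var_self, mem_fv_liftTimes]; simp only [fv, Set.mem_singleton_iff]; grind
    · rw [subst_var_of_gt _ h]; simp only [fv, Set.mem_singleton_iff]; omega
  | app a b iha ihb =>
    simp only [subst, fv, Set.mem_union, iha, ihb]
    grind
  | lam a ih =>
    simp only [subst, fv, Set.mem_ofPred_eq, ih]
    grind

lemma mem_fv_subst_zero {n : ℕ} (v u : Trm) :
    n ∈ fv (subst u 0 v) ↔ n + 1 ∈ fv u ∨ (0 ∈ fv u ∧ n ∈ fv v) := by
  simp [mem_fv_subst]

end FreeVariables

end Trm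

open Trm

section BetaSubstitution

lemma Beta.lift {a a' : Trm} (h : Beta a a') (d : ℕ) : Beta (lift d a) (lift d a') := by
  induction h generalizing d with
  | beta => rw [lift_subst_zero]; exact Beta.beta
  | appL _ ih => exact Beta.appL (ih d)
  | appR _ ih => exact Beta.appR (ih d)
  | lam _ ih => exact Beta.lam (ih (d + 1))

lemma Beta.liftTimes {a a' : Trm} (h : Beta a a') (k : ℕ) :
    Beta (liftTimes k a) (liftTimes k a') := by
  induction k with
  | zero => exact h
  | succ k ih => rw [liftTimes_succ, liftTimes_succ]; exact ih.lift 0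

lemma Beta.subst {a a' : Trm} (h : Beta a a') (k : ℕ) (v : Trm) :
    Beta (subst a k v) (subst a' k v) := by
  induction h generalizing k with
  | beta => rw [subst_subst_zero]; exact Beta.beta
  | appL _ ih => exact Beta.appL (ih k)
  | appR _ ih => exact Beta.appR (ih k)
  | lam _ ih => exact Beta.lam (ih (k + 1))

lemma BetaStar.appL {a a' : Trm} (h : BetaStar a a') (b : Trm) :
    BetaStar (.app a b) (.app a' b) :=
  ReflTransGen.lift (Trm.app · b) (fun _ _ => Beta.appL) _ _ h

lemma BetaStar.appR {b b' : Trm} (h : BetaStar b b') (a : Trm) :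
    BetaStar (.app a b) (.app a b') :=
  ReflTransGen.lift (Trm.app a ·) (fun _ _ => Beta.appR) _ _ h

lemma BetaStar.lam {a a' : Trm} (h : BetaStar a a') : BetaStar (.lam a) (.lam a') :=
  ReflTransGen.lift Trm.lam (fun _ _ => Beta.lam) _ _ h

lemma Beta.subst_arg {v v' : Trm} (h : Beta v v') (t : Trm) (k : ℕ) :
    BetaStar (t.subst k v) (t.subst k v') := by
  induction t generalizing k with
  | var n =>
    rcases lt_trichotomy n k with h1 | rfl | h1
    · rw [subst_var_of_lt _ h1, subst_var_of_lt _ h1]; exact .refl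
    · rw [subst_var_self, subst_var_self]; exact .single (h.liftTimes n)
    · rw [subst_var_of_gt _ h1, subst_var_of_gt _ h1]; exact .refl
  | app a b iha ihb => exact ((iha k).appL _).trans ((ihb k).appR _)
  | lam a ih => exact (ih (k + 1)).lam

lemma Beta.subst_arg_of_mem_fv {v v' : Trm} (h : Beta v v') {t : Trm} {k : ℕ} (hk : k ∈ fv t) :
    TransGen Beta (t.subst k v) (t.subst k v') := by
  induction t generalizing k with
  | var n =>
    obtain rfl : n = k := hk.symm
    rw [subst_var_self, subst_var_self]
    exact .single (h.liftTimes n)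
  | app a b iha ihb =>
    rcases hk with hk | hk
    · exact .trans_left (TransGen.lift (Trm.app · _) (fun _ _ => Beta.appL) _ _ (iha hk))
        ((h.subst_arg b k).appR _)
    · exact .trans_right ((h.subst_arg a k).appL _)
        (TransGen.lift (Trm.app _ ·) (fun _ _ => Beta.appR) _ _ (ihb hk))
  | lam a ih => exact TransGen.lift Trm.lam (fun _ _ => Beta.lam) _ _ (ih hk)

end BetaSubstitution

section LambdaI

lemma Trm.isLI_app_iff {u v : Trm} : IsLI (app u v) ↔ IsLI u ∧ IsLI v :=
  ⟨fun h => by cases h with | app hu hv => exact ⟨hu, hv⟩, fun ⟨hu, hv⟩ => .app hu hv⟩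

lemma Trm.isLI_lam_iff {u : Trm} : IsLI (lam u) ↔ IsLI u ∧ 0 ∈ fv u :=
  ⟨fun h => by cases h with | lam hu h0 => exact ⟨hu, h0⟩, fun ⟨hu, h0⟩ => .lam hu h0⟩

lemma Trm.IsLI.lift {t : Trm} (h : IsLI t) (d : ℕ) : IsLI (t.lift d) := by
  induction h generalizing d with
  | var n => unfold Trm.lift; split_ifs <;> exact .var _
  | app _ _ iha ihb => exact .app (iha d) (ihb d)
  | lam _ h0 ih => exact .lam (ih (d + 1)) ((mem_fv_lift _).mpr (.inl ⟨by omega, h0⟩))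

lemma Trm.IsLI.liftTimes {t : Trm} (h : IsLI t) (k : ℕ) : IsLI (t.liftTimes k) := by
  induction k with
  | zero => exact h
  | succ k ih => rw [liftTimes_succ]; exact ih.lift 0

lemma Trm.IsLI.subst {t v : Trm} (ht : IsLI t) (hv : IsLI v) (k : ℕ) : IsLI (t.subst k v) := by
  induction ht generalizing k with
  | var n =>
    rcases lt_trichotomy n k with h | rfl | h
    · rw [subst_var_of_lt _ h]; exact .var _
    · rw [subst_var_self]; exact hv.liftTimes _
    · rw [subst_var_of_gt _ h]; exact .var _
  | app _ _ iha ihb => exact .app (iha k) (ihb k)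
  | lam _ h0 ih => exact .lam (ih (k + 1)) ((mem_fv_subst _ _).mpr (.inl ⟨by omega, h0⟩))

lemma Beta.fv_eq {t t' : Trm} (h : Beta t t') (ht : IsLI t) : fv t' = fv t := by
  induction h with
  | beta =>
    have h0 := (isLI_lam_iff.mp (isLI_app_iff.mp ht).1).2
    ext n
    simp [mem_fv_subst_zero, fv, h0]
  | appL _ ih => simp only [fv, ih (isLI_app_iff.mp ht).1]
  | appR _ ih => simp only [fv, ih (isLI_app_iff.mp ht).2]
  | lam _ ih => simp only [fv, ih (isLI_lam_iff.mp ht).1]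

lemma Beta.isLI {t t' : Trm} (h : Beta t t') (ht : IsLI t) : IsLI t' := by
  induction h with
  | beta =>
    obtain ⟨hu, hv⟩ := isLI_app_iff.mp ht
    exact (isLI_lam_iff.mp hu).1.subst hv 0
  | appL _ ih => obtain ⟨ha, hb⟩ := isLI_app_iff.mp ht; exact .app (ih ha) hb
  | appR _ ih => obtain ⟨ha, hb⟩ := isLI_app_iff.mp ht; exact .app ha (ih hb)
  | lam hstep ih =>
    obtain ⟨hu, h0⟩ := isLI_lam_iff.mp ht
    exact .lam (ih hu) (hstep.fv_eq hu ▸ h0)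

end LambdaI

section StrongNormalization

def SN (t : Trm) : Prop := Acc (fun a b => Beta b a) t

lemma stronglyNormalizable_iff_sn (t : Trm) : StronglyNormalizable t ↔ SN t :=
  not_iff_comm.mp not_acc_iff_exists_descending_chain

lemma SN.weaklyNormalizing {t : Trm} (h : SN t) : ∃ u, BetaStar t u ∧ BetaNormal u := by
  induction h with
  | intro x _ ih =>
    by_cases hx : BetaNormal x
    · exact ⟨x, .refl, hx⟩
    · obtain ⟨y, hy⟩ := not_forall_not.mp hx
      obtain ⟨u, hyu, hu⟩ := ih y hy
      exact ⟨u, .head hy hyu, hu⟩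

lemma sn_var (n : ℕ) : SN (.var n) := ⟨_, fun _ h => by cases h⟩

lemma SN.lam {u : Trm} (h : SN u) : SN (.lam u) := by
  induction h with
  | intro x _ ih => exact ⟨_, fun _ h => by cases h with | lam h => exact ih _ h⟩

lemma SN.app {a b : Trm} (ha : SN a) (hb : SN b) (hlam : ∀ u, ¬ BetaStar a (.lam u)) :
    SN (.app a b) := by
  induction ha generalizing b with
  | intro a _ iha =>
    induction hb with
    | intro b hb ihb =>
      refine ⟨_, fun r hr => ?_⟩
      cases hr with
      | beta => exact absurd .refl (hlam _)
      | appL h => exact iha _ h ⟨b, hb⟩ fun u hu => hlam u (.head h hu)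
      | appR h => exact ihb _ h

end StrongNormalization

section HeadReduction

inductive HeadBeta : Trm → Trm → Prop
  | beta {u v : Trm} : HeadBeta (.app (.lam u) v) (u.subst 0 v)
  | appL {a a' b : Trm} : HeadBeta a a' → HeadBeta (.app a b) (.app a' b)

def HeadBetaStar : Trm → Trm → Prop := ReflTransGen HeadBeta

lemma HeadBeta.toBeta {a a' : Trm} (h : HeadBeta a a') : Beta a a' := by
  induction h with
  | beta => exact .beta
  | appL _ ih => exact .appL ih

lemma HeadBeta.rightUnique : Relator.RightUnique HeadBeta := by
  intro a b c hb hc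
  induction hb generalizing c with
  | beta =>
    cases hc with
    | beta => rfl
    | appL h => cases h
  | appL h ih =>
    cases hc with
    | beta => cases h
    | appL h' => rw [ih h']

lemma HeadBeta.lift {a a' : Trm} (h : HeadBeta a a') (d : ℕ) :
    HeadBeta (a.lift d) (a'.lift d) := by
  induction h generalizing d with
  | beta => rw [lift_subst_zero]; exact .beta
  | appL _ ih => exact .appL (ih d)

lemma HeadBeta.subst {a a' : Trm} (h : HeadBeta a a') (k : ℕ) (v : Trm) :
    HeadBeta (a.subst k v) (a'.subst k v) := by
  induction h with
  | beta => rw [subst_subst_zero]; exact .beta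
  | appL _ ih => exact .appL ih

lemma HeadBetaStar.lift {a a' : Trm} (h : HeadBetaStar a a') (d : ℕ) :
    HeadBetaStar (a.lift d) (a'.lift d) :=
  ReflTransGen.lift (Trm.lift d) (fun _ _ hb => hb.lift d) _ _ h

lemma HeadBetaStar.subst {a a' : Trm} (h : HeadBetaStar a a') (k : ℕ) (v : Trm) :
    HeadBetaStar (a.subst k v) (a'.subst k v) :=
  ReflTransGen.lift (Trm.subst · k v) (fun _ _ hb => hb.subst k v) _ _ h

lemma HeadBetaStar.appL {a a' : Trm} (h : HeadBetaStar a a') (b : Trm) :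
    HeadBetaStar (.app a b) (.app a' b) :=
  ReflTransGen.lift (Trm.app · b) (fun _ _ => HeadBeta.appL) _ _ h

lemma HeadBetaStar.isLI {a a' : Trm} (h : HeadBetaStar a a') (ha : IsLI a) : IsLI a' := by
  induction h with
  | refl => exact ha
  | tail _ hstep ih => exact hstep.toBeta.isLI ih

/-- The other step survives the head step because a λI-redex does not erase its argument. -/
lemma HeadBeta.eq_or_commute_of_beta {M M' r : Trm} (h : HeadBeta M M') (hM : IsLI M)
    (hr : Beta M r) : r = M' ∨ ∃ r', HeadBeta r r' ∧ TransGen Beta M' r' := by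
  induction h generalizing r with
  | @beta u v =>
    cases hr with
    | beta => exact .inl rfl
    | appL h =>
      cases h with
      | lam h => exact .inr ⟨_, .beta, .single (h.subst 0 v)⟩
    | appR h =>
      have h0 := (isLI_lam_iff.mp (isLI_app_iff.mp hM).1).2
      exact .inr ⟨_, .beta, h.subst_arg_of_mem_fv h0⟩
  | @appL a a' b ha ih =>
    cases hr with
    | beta => cases ha
    | appL h =>
      rcases ih (isLI_app_iff.mp hM).1 h with rfl | ⟨r', hhead, hsteps⟩
      · exact .inl rfl
      · exact .inr ⟨_, .appL hhead, TransGen.lift (Trm.app · b) (fun _ _ => Beta.appL) _ _ hsteps⟩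
    | appR h => exact .inr ⟨_, .appL ha, .single (.appR h)⟩

lemma SN.of_headBeta {M M' : Trm} (hM : IsLI M) (h : HeadBeta M M') (hsn : SN M') : SN M := by
  have hacc : Acc (TransGen fun a b => Beta b a) M' := hsn.transGen
  clear hsn
  induction hacc generalizing M with
  | intro M' hM' ih =>
    refine ⟨_, fun r hr => ?_⟩
    rcases h.eq_or_commute_of_beta hM hr with rfl | ⟨r', hhead, hsteps⟩
    · exact acc_transGen_iff.mp ⟨_, hM'⟩
    · exact ih r' (transGen_swap.mpr hsteps) (hr.isLI hM) hhead

lemma SN.of_headBetaStar {M M' : Trm} (hM : IsLI M) (h : HeadBetaStar M M') (hsn : SN M') :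
    SN M := by
  induction h using ReflTransGen.head_induction_on with
  | refl => exact hsn
  | head hstep _ ih => exact .of_headBeta hM hstep (ih (hstep.toBeta.isLI hM))

lemma HeadBetaStar.exists_lam_of_app {a b u : Trm} (h : HeadBetaStar (.app a b) (.lam u)) :
    ∃ w, HeadBetaStar a (.lam w) := by
  generalize hM : Trm.app a b = M at h
  induction h using ReflTransGen.head_induction_on generalizing a b with
  | refl => cases hM
  | head hstep _ ih =>
    subst hM
    cases hstep with
    | beta => exact ⟨_, .refl⟩
    | appL ha =>
      obtain ⟨w, hw⟩ := ih rfl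
      exact ⟨w, .head ha hw⟩

end HeadReduction

section Standardization

/-- Kashima's inductive presentation of standard reduction. -/
inductive StdRed : Trm → Trm → Prop
  | var {M : Trm} {n : ℕ} : HeadBetaStar M (.var n) → StdRed M (.var n)
  | app {M M₁ M₂ N₁ N₂ : Trm} :
      HeadBetaStar M (.app M₁ M₂) → StdRed M₁ N₁ → StdRed M₂ N₂ → StdRed M (.app N₁ N₂)
  | lam {M M' N' : Trm} : HeadBetaStar M (.lam M') → StdRed M' N' → StdRed M (.lam N')

lemma StdRed.refl (M : Trm) : StdRed M M := by
  induction M with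
  | var n => exact .var .refl
  | app a b iha ihb => exact .app .refl iha ihb
  | lam a ih => exact .lam .refl ih

lemma StdRed.head {M M' N : Trm} (h : HeadBetaStar M M') (h' : StdRed M' N) : StdRed M N := by
  cases h' with
  | var h'' => exact .var (h.trans h'')
  | app h'' h₁ h₂ => exact .app (h.trans h'') h₁ h₂
  | lam h'' h₁ => exact .lam (h.trans h'') h₁

lemma StdRed.lift {A B : Trm} (h : StdRed A B) (d : ℕ) : StdRed (A.lift d) (B.lift d) := by
  induction h generalizing d with
  | var hM =>
    have hM' := hM.lift d
    unfold Trm.lift at hM' ⊢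
    split_ifs at hM' ⊢ <;> exact .var hM'
  | app hM _ _ ih₁ ih₂ => exact .app (hM.lift d) (ih₁ d) (ih₂ d)
  | lam hM _ ih => exact .lam (hM.lift d) (ih (d + 1))

lemma StdRed.liftTimes {A B : Trm} (h : StdRed A B) (k : ℕ) :
    StdRed (A.liftTimes k) (B.liftTimes k) := by
  induction k with
  | zero => exact h
  | succ k ih => rw [liftTimes_succ, liftTimes_succ]; exact ih.lift 0

lemma StdRed.subst {A B C D : Trm} (h : StdRed A B) (h' : StdRed C D) (k : ℕ) :
    StdRed (A.subst k C) (B.subst k D) := by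
  induction h generalizing k with
  | @var _ n hM =>
    have hM' := hM.subst k C
    rcases lt_trichotomy n k with hn | rfl | hn
    · rw [subst_var_of_lt _ hn] at hM' ⊢; exact .var hM'
    · rw [subst_var_self] at hM' ⊢; exact .head hM' (h'.liftTimes n)
    · rw [subst_var_of_gt _ hn] at hM' ⊢; exact .var hM'
  | app hM _ _ ih₁ ih₂ => exact .app (hM.subst k C) (ih₁ k) (ih₂ k)
  | lam hM _ ih => exact .lam (hM.subst k C) (ih (k + 1))

lemma StdRed.tail {M N L : Trm} (h : StdRed M N) (hNL : Beta N L) : StdRed M L := by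
  induction h generalizing L with
  | var _ => cases hNL
  | @app _ _ M₂ _ _ hM h₁ h₂ ih₁ ih₂ =>
    cases hNL with
    | beta =>
      cases h₁ with
      | lam hM₁ h₁' => exact .head (.tail (hM.trans (hM₁.appL M₂)) .beta) (h₁'.subst h₂ 0)
    | appL h => exact .app hM (ih₁ h) h₂
    | appR h => exact .app hM h₁ (ih₂ h)
  | lam hM _ ih =>
    cases hNL with
    | lam h => exact .lam hM (ih h)

theorem BetaStar.stdRed {M N : Trm} (h : BetaStar M N) : StdRed M N := by
  induction h with
  | refl => exact .refl M
  | tail _ hstep ih => exact ih.tail hstep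

end Standardization

section Conservation

lemma BetaNormal.of_app {a b : Trm} (h : BetaNormal (.app a b)) :
    BetaNormal a ∧ BetaNormal b ∧ ∀ u, a ≠ .lam u :=
  ⟨fun _ ha => h _ (.appL ha), fun _ hb => h _ (.appR hb), fun _ ha => h _ (ha ▸ Beta.beta)⟩

/-- Head reduction is deterministic, so a head reduction of `M` to an abstraction is comparable
with the one the standard reduction starts with. -/
lemma StdRed.not_headBetaStar_lam {M N : Trm} (h : StdRed M N) (hN : BetaNormal N)
    (hNlam : ∀ u, N ≠ .lam u) (w : Trm) : ¬ HeadBetaStar M (.lam w) := by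
  intro hMw
  induction h generalizing w with
  | var hM =>
    rcases hM.total_of_right_unique HeadBeta.rightUnique hMw with h | h
    · cases (reflTransGen_iff_eq (fun _ h => by cases h)).mp h
    · cases (reflTransGen_iff_eq (fun _ h => by cases h)).mp h
  | app hM _ _ ih₁ =>
    obtain ⟨hN₁, -, hN₁lam⟩ := hN.of_app
    rcases hM.total_of_right_unique HeadBeta.rightUnique hMw with h | h
    · obtain ⟨w', hw'⟩ := HeadBetaStar.exists_lam_of_app h
      exact ih₁ hN₁ hN₁lam w' hw'
    · cases (reflTransGen_iff_eq (fun _ h => by cases h)).mp h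
  | lam => exact hNlam _ rfl

lemma StdRed.not_betaStar_lam {M N : Trm} (h : StdRed M N) (hN : BetaNormal N)
    (hNlam : ∀ u, N ≠ .lam u) (u : Trm) : ¬ BetaStar M (.lam u) := fun hMu => by
  cases hMu.stdRed with
  | lam hM _ => exact h.not_headBetaStar_lam hN hNlam _ hM

lemma StdRed.sn {M N : Trm} (h : StdRed M N) (hM : IsLI M) (hN : BetaNormal N) : SN M := by
  induction h with
  | var hM' => exact .of_headBetaStar hM hM' (sn_var _)
  | app hM' h₁ _ ih₁ ih₂ =>
    obtain ⟨hM₁, hM₂⟩ := isLI_app_iff.mp (hM'.isLI hM)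
    obtain ⟨hN₁, hN₂, hN₁lam⟩ := hN.of_app
    exact .of_headBetaStar hM hM'
      (.app (ih₁ hM₁ hN₁) (ih₂ hM₂ hN₂) (h₁.not_betaStar_lam hN₁ hN₁lam))
  | lam hM' _ ih =>
    have hM₁ := (isLI_lam_iff.mp (hM'.isLI hM)).1
    exact .of_headBetaStar hM hM' (ih hM₁ fun _ h => hN _ (.lam h)).lam

end Conservation

/-- a λI-term is strongly normalizable iff it is weakly normalizable. -/
theorem stmt1 (t : Trm) (ht : Trm.IsLI t) :
    StronglyNormalizable t ↔ ∃ u : Trm, BetaStar t u ∧ BetaNormal u := by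
  rw [stronglyNormalizable_iff_sn]
  refine ⟨SN.weaklyNormalizing, ?_⟩
  rintro ⟨u, htu, hu⟩
  exact htu.stdRed.sn ht hu
end

section
/- Let t be a β-normal λ-term. Then ⊢_F t : Id holds if and only if t = λx x. -/
set_option maxHeartbeats 1000000


/-- Types of system F in de Bruijn representation. -/
inductive Ty : Type
  | var : ℕ → Ty
  | arr : Ty → Ty → Ty
  | all : Ty → Ty
  deriving DecidableEq

namespace Ty

/-- Free type variables. -/
def tfv : Ty → Set ℕ
  | var n => {n}
  | arr A B => tfv A ∪ tfv B
  | all A => {n | n + 1 ∈ tfv A}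

/-- Lifting of free type variables ≥ d. -/
def tlift (d : ℕ) : Ty → Ty
  | var n => if n < d then var n else var (n + 1)
  | arr A B => arr (tlift d A) (tlift d B)
  | all A => all (tlift (d + 1) A)

def tliftTimes (k : ℕ) (A : Ty) : Ty := (tlift 0)^[k] A

/-- Substitution of the k-th free type variable. -/
def tsubst : Ty → ℕ → Ty → Ty
  | var n, k, G => if n < k then var n else if n = k then tliftTimes k G else var (n - 1)
  | arr A B, k, G => arr (tsubst A k G) (tsubst B k G)
  | all A, k, G => all (tsubst A (k + 1) G)

/-- Proper types: in every subtype ∀X E, the variable X occurs free in E. -/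
def Proper : Ty → Prop
  | var _ => True
  | arr A B => Proper A ∧ Proper B
  | all A => Proper A ∧ 0 ∈ tfv A

/-- Closed types. -/
def ClosedTy (A : Ty) : Prop := tfv A = ∅

end Ty

/-- Typing judgments of system F (restricted to proper types:
the rule (∀e) requires X free in A and instantiates at proper types only). -/
inductive Typing : List Ty → Trm → Ty → Prop
  | ax {Γ : List Ty} {n : ℕ} {A : Ty} :
      Γ[n]? = some A → (∀ B ∈ Γ, B.Proper) → Typing Γ (.var n) A
  | arrI {Γ : List Ty} {A B : Ty} {t : Trm} :
      A.Proper → Typing (A :: Γ) t B → Typing Γ (.lam t) (.arr A B)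
  | arrE {Γ : List Ty} {A B : Ty} {u v : Trm} :
      Typing Γ u (.arr A B) → Typing Γ v A → Typing Γ (.app u v) B
  | allI {Γ : List Ty} {A : Ty} {t : Trm} :
      0 ∈ Ty.tfv A → Typing (Γ.map (Ty.tlift 0)) t A → Typing Γ t (.all A)
  | allE {Γ : List Ty} {A : Ty} {t : Trm} (G : Ty) :
      G.Proper → 0 ∈ Ty.tfv A → Typing Γ t (.all A) → Typing Γ t (A.tsubst 0 G)

/-- The type Id = ∀X {X → X}. -/
def IdTy : Ty := .all (.arr (.var 0) (.var 0))

namespace Stmt5Aux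

/-- Iterated ∀ quantifier. -/
def allPow : ℕ → Ty → Ty
  | 0, A => A
  | k+1, A => .all (allPow k A)

def NotAll (A : Ty) : Prop := ∀ B, A ≠ .all B

lemma notAll_var (n : ℕ) : NotAll (.var n) := by intro B h; cases h
lemma notAll_arr (A B : Ty) : NotAll (.arr A B) := by intro C h; cases h

lemma allPow_inj {j k : ℕ} {X Y : Ty} (h : allPow j X = allPow k Y)
    (hX : NotAll X) (hY : NotAll Y) : j = k ∧ X = Y := by
  induction j generalizing k with
  | zero =>
    cases k with
    | zero => exact ⟨rfl, h⟩
    | succ k => exact absurd h (hX _)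
  | succ j ih =>
    cases k with
    | zero => exact absurd h.symm (hY _)
    | succ k =>
      simp only [allPow] at h
      injection h with h
      obtain ⟨h1, h2⟩ := ih h
      exact ⟨by omega, h2⟩

lemma decomp (A : Ty) : ∃ k B, NotAll B ∧ A = allPow k B := by
  induction A with
  | var n => exact ⟨0, .var n, notAll_var n, rfl⟩
  | arr X Y ihX ihY => exact ⟨0, .arr X Y, notAll_arr X Y, rfl⟩
  | all A ih =>
    obtain ⟨k, B, h1, h2⟩ := ih
    exact ⟨k + 1, B, h1, by simp [allPow, h2]⟩

lemma tsubst_allPow (k d : ℕ) (B G : Ty) :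
    (allPow k B).tsubst d G = allPow k (B.tsubst (d + k) G) := by
  induction k generalizing d with
  | zero => simp [allPow]
  | succ k ih =>
    simp only [allPow, Ty.tsubst]
    rw [ih (d + 1), show d + 1 + k = d + (k + 1) by omega]

lemma tsubst_var_shape {C : Ty} {k a : ℕ} {G : Ty} (h : C.tsubst k G = .var a) :
    ∃ p, C = .var p := by
  cases C with
  | var p => exact ⟨p, rfl⟩
  | arr X Y => simp [Ty.tsubst] at h
  | all X => simp [Ty.tsubst] at h

/-- A λ-abstraction never has a type of the form ∀…∀ X. -/
lemma lam_not_allPow_var {Γ : List Ty} {t : Trm} {A : Ty} (h : Typing Γ t A) :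
    ∀ w, t = .lam w → ∀ k m, A = allPow k (.var m) → False := by
  induction h with
  | ax _ _ => intro w hw; cases hw
  | arrE _ _ _ _ => intro w hw; cases hw
  | arrI hP hprem ih =>
    intro w hw k m hA
    cases k with
    | zero => cases hA
    | succ k => cases hA
  | allI h0 hprem ih =>
    intro w hw k m hA
    cases k with
    | zero => cases hA
    | succ k =>
      injection hA with hA
      exact ih w hw k m hA
  | @allE Γ' A' t' G hG h0 hprem ih =>
    intro w hw k m hA
    obtain ⟨k', B, hB, hd⟩ := decomp A'
    subst hd
    cases B with
    | var m' => exact ih w hw (k' + 1) m' rfl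
    | arr X Y =>
      rw [tsubst_allPow] at hA
      obtain ⟨_, h2⟩ := allPow_inj hA (by intro C hC; cases hC) (notAll_var m)
      cases h2
    | all X => exact absurd rfl (hB X)

lemma bn_lam {w : Trm} (h : BetaNormal (.lam w)) : BetaNormal w :=
  fun u hu => h _ (Beta.lam hu)

/-- Shape of β-normal typable terms in a context of type variables. -/
lemma norm_shape {Γ : List Ty} {t : Trm} {A : Ty} (h : Typing Γ t A) :
    (∀ B ∈ Γ, ∃ m, B = Ty.var m) → BetaNormal t →
    (∃ w, t = .lam w) ∨ (∃ n m, t = .var n ∧ A = .var m ∧ Γ[n]? = some (.var m)) := by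
  induction h with
  | @ax Γ n A hget hP =>
    intro hΓ hn
    have hA : A ∈ Γ := List.mem_iff_getElem?.mpr ⟨n, hget⟩
    obtain ⟨m, rfl⟩ := hΓ A hA
    exact Or.inr ⟨n, m, rfl, rfl, hget⟩
  | arrI hP hprem ih => intro hΓ hn; exact Or.inl ⟨_, rfl⟩
  | @arrE Γ A B u v hu hv ihu ihv =>
    intro hΓ hn
    have hnu : BetaNormal u := fun u' hu' => hn _ (Beta.appL hu')
    rcases ihu hΓ hnu with ⟨w, rfl⟩ | ⟨n, m, rfl, hm, hget⟩
    · exact absurd Beta.beta (hn _)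
    · cases hm
  | @allI Γ A t h0 hprem ih =>
    intro hΓ hn
    have hΓ' : ∀ B ∈ Γ.map (Ty.tlift 0), ∃ m, B = Ty.var m := by
      intro B hB
      rw [List.mem_map] at hB
      obtain ⟨B', hB', rfl⟩ := hB
      obtain ⟨j, rfl⟩ := hΓ B' hB'
      exact ⟨j + 1, by simp [Ty.tlift]⟩
    rcases ih hΓ' hn with ⟨w, rfl⟩ | ⟨n, m, rfl, hm, hget⟩
    · exact Or.inl ⟨w, rfl⟩
    · subst hm
      have hm0 : 0 = m := by simpa [Ty.tfv] using h0
      subst hm0  -- m := 0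
      rw [List.getElem?_map] at hget
      cases hB : Γ[n]? with
      | none => rw [hB] at hget; cases hget
      | some B =>
        rw [hB] at hget
        cases B with
        | var j => simp [Ty.tlift] at hget
        | arr X Y => simp [Ty.tlift] at hget
        | all X => simp [Ty.tlift] at hget
  | allE G hG h0 hprem ih =>
    intro hΓ hn
    rcases ih hΓ hn with ⟨w, rfl⟩ | ⟨n, m, rfl, hm, hget⟩
    · exact Or.inl ⟨w, rfl⟩
    · cases hm

/-- Key inversion: a β-normal λ-abstraction closed-typed with a type of the
form ∀…∀ (Xa → Xb) must be the identity, and a = b. -/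
lemma key {Γ : List Ty} {t : Trm} {A : Ty} (h : Typing Γ t A) :
    ∀ w, t = .lam w → Γ = [] → BetaNormal t →
    ∀ k a b, A = allPow k (.arr (.var a) (.var b)) → w = .var 0 ∧ a = b := by
  induction h with
  | ax _ _ => intro w hw; cases hw
  | arrE _ _ _ _ => intro w hw; cases hw
  | @arrI Γ B C t' hP hprem ih =>
    intro w hw hΓ hn k a b hA
    cases k with
    | succ k => cases hA
    | zero =>
      injection hA with h1 h2
      subst h1; subst h2; subst hΓ
      injection hw with hw'; subst hw'
      have hnw : BetaNormal t' := bn_lam hn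
      have hΓ' : ∀ B ∈ [Ty.var a], ∃ m, B = Ty.var m := by
        intro B hB; rw [List.mem_singleton] at hB; exact ⟨a, hB⟩
      rcases norm_shape hprem hΓ' hnw with ⟨w2, hw2⟩ | ⟨n, m, hvn, hm, hget⟩
      · exact (lam_not_allPow_var hprem w2 hw2 0 b rfl).elim
      · cases n with
        | zero =>
          simp only [List.getElem?_cons_zero, Option.some.injEq] at hget
          injection hget with ha
          injection hm with hb
          exact ⟨hvn, by omega⟩
        | succ n => simp at hget
  | @allI Γ A t' h0 hprem ih =>
    intro w hw hΓ hn k a b hA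
    cases k with
    | zero => cases hA
    | succ k =>
      injection hA with hA
      exact ih w hw (by subst hΓ; rfl) hn k a b hA
  | @allE Γ A t' G hG h0 hprem ih =>
    intro w hw hΓ hn k a b hA
    obtain ⟨k', B, hB, rfl⟩ := decomp A
    cases B with
    | var m' =>
      exact (lam_not_allPow_var hprem w hw (k' + 1) m' rfl).elim
    | arr X Y =>
      rw [tsubst_allPow] at hA
      obtain ⟨hk, h2⟩ := allPow_inj hA (by intro C hC; cases hC)
        (notAll_arr _ _)
      subst hk
      simp only [Ty.tsubst] at h2
      injection h2 with h2X h2Y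
      obtain ⟨p, rfl⟩ := tsubst_var_shape h2X
      obtain ⟨q, rfl⟩ := tsubst_var_shape h2Y
      obtain ⟨hw0, hpq⟩ := ih w hw hΓ hn (k' + 1) p q rfl
      subst hpq
      rw [h2X] at h2Y
      injection h2Y with hab
      exact ⟨hw0, hab⟩
    | all X => exact absurd rfl (hB X)

end Stmt5Aux

/-- for β-normal t, ⊢_F t : Id iff t = λx x. -/
theorem stmt5 (t : Trm) (hn : BetaNormal t) :
    Typing [] t IdTy ↔ t = .lam (.var 0) := by
  constructor
  · intro h
    rcases Stmt5Aux.norm_shape h (by simp) hn with ⟨w, rfl⟩ | ⟨n, m, rfl, hm, hget⟩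
    · obtain ⟨hw, _⟩ := Stmt5Aux.key h w rfl rfl hn 1 0 0 rfl
      rw [hw]
    · simp at hget
  · rintro rfl
    refine Typing.allI ?_ (Typing.arrI ?_ (Typing.ax ?_ ?_))
    · simp [Ty.tfv]
    · trivial
    · rfl
    · intro B hB
      simp only [List.map_nil, List.mem_singleton] at hB
      subst hB
      trivial
end

section
/- Let t be a β-normal λ-term. Then ⊢_F t : Bool holds if and only if t = λx λy y or t = λx λy x. -/
set_option maxHeartbeats 1000000


/-- The type Bool = ∀X {X → (X → X)}. -/
def Bool' : Ty := .all (.arr (.var 0) (.arr (.var 0) (.var 0)))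

/-!
Instantiating the quantifier of `Bool'` at a type variable `X`, a typing of `t = λx u` inverts to
`x : X ⊢ u : X → X`, and once more, `u = λy w` with `x y : X ⊢ w : X`. Inverting the abstraction
rule in system F needs closure of typing under type substitution, since (∀i) may be followed by
(∀e). In a context of type variables, a β-normal term that is not an abstraction is a variable
applied to arguments, and only a bare variable can be typed there; an abstraction never has a
variable type. So `w` is `x` or `y`.
-/

namespace Ty

theorem tliftTimes_succ (k : ℕ) (A : Ty) : tliftTimes (k + 1) A = tlift 0 (tliftTimes k A) :=
  Function.iterate_succ_apply' _ _ _

theorem tlift_tlift (A : Ty) {d e : ℕ} (h : e ≤ d) :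
    tlift (d + 1) (tlift e A) = tlift e (tlift d A) := by
  induction A generalizing d e with
  | var n => by_cases n < e <;> by_cases n < d <;> simp [tlift, *] <;> omega
  | arr A B ihA ihB => simp [tlift, ihA h, ihB h]
  | all A ih => simp [tlift, ih (Nat.succ_le_succ h)]

theorem tlift_tliftTimes (A : Ty) {d k : ℕ} (h : d ≤ k) :
    tlift d (tliftTimes k A) = tliftTimes (k + 1) A := by
  induction k generalizing d with
  | zero => simp [Nat.le_zero.mp h, tliftTimes]
  | succ k ih =>
    rcases d with _ | d
    · exact (tliftTimes_succ _ _).symm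
    · rw [tliftTimes_succ, tlift_tlift _ (Nat.zero_le d), ih (by omega), tliftTimes_succ (k + 1)]

theorem tsubst_tlift (A : Ty) {d k : ℕ} (G : Ty) (h : d ≤ k) :
    tsubst (tlift d A) (k + 1) G = tlift d (tsubst A k G) := by
  induction A generalizing d k with
  | var n =>
    rcases Nat.lt_trichotomy n k with hn | rfl | hn
    · by_cases n < d <;> simp [tlift, tsubst, *, show n < k + 1 by omega]
    · simp [tlift, tsubst, show ¬ n < d by omega, tlift_tliftTimes G h]
    · simp [tlift, tsubst, show ¬ n < d by omega, show ¬ n < k by omega, show n ≠ k by omega,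
        show ¬ n - 1 < d by omega]
      omega
  | arr A B ihA ihB => simp [tlift, tsubst, ihA h, ihB h]
  | all A ih => simp [tlift, tsubst, ih (Nat.succ_le_succ h)]

theorem tsubst_tlift_self (A : Ty) (d : ℕ) (G : Ty) : tsubst (tlift d A) d G = A := by
  induction A generalizing d with
  | var n =>
    by_cases h : n < d
    · simp [tlift, tsubst, h]
    · simp [tlift, tsubst, h, show ¬ n + 1 < d by omega, show n + 1 ≠ d by omega]
  | arr A B ihA ihB => simp [tlift, tsubst, ihA, ihB]
  | all A ih => simp [tlift, tsubst, ih]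

theorem tsubst_tliftTimes_add (A : Ty) (j m : ℕ) (G : Ty) :
    tsubst (tliftTimes j A) (j + m) G = tliftTimes j (tsubst A m G) := by
  induction j with
  | zero => simp [tliftTimes]
  | succ j ih =>
    rw [tliftTimes_succ, tliftTimes_succ, Nat.add_right_comm, tsubst_tlift _ _ (Nat.zero_le _), ih]

theorem tsubst_tliftTimes_succ (A : Ty) {i m : ℕ} (G : Ty) (h : i ≤ m) :
    tsubst (tliftTimes (m + 1) A) i G = tliftTimes m A := by
  induction i generalizing m with
  | zero => rw [tliftTimes_succ, tsubst_tlift_self]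
  | succ i ih =>
    obtain ⟨m, rfl⟩ : ∃ m', m = m' + 1 := ⟨m - 1, by omega⟩
    rw [tliftTimes_succ, tsubst_tlift _ _ (Nat.zero_le _), ih (by omega), tliftTimes_succ]

theorem tsubst_tsubst (A : Ty) (j m : ℕ) (G' G : Ty) :
    tsubst (tsubst A j G') (j + m) G = tsubst (tsubst A (j + m + 1) G) j (tsubst G' m G) := by
  induction A generalizing j with
  | var n =>
    rcases Nat.lt_trichotomy n j with h | rfl | h
    · simp [tsubst, h, show n < j + m by omega, show n < j + m + 1 by omega]
    · simp [tsubst, show n < n + m + 1 by omega, tsubst_tliftTimes_add]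
    · rcases Nat.lt_trichotomy n (j + m + 1) with h2 | rfl | h2
      · simp [tsubst, h2, show ¬ n < j by omega, show n ≠ j by omega, show n - 1 < j + m by omega]
      · simp [tsubst, tsubst_tliftTimes_succ _ _ (Nat.le_add_right j m),
          show ¬ j + m + 1 < j by omega, show j + m + 1 ≠ j by omega]
      · simp [tsubst, show ¬ n < j by omega, show n ≠ j by omega, show ¬ n < j + m + 1 by omega,
          show n ≠ j + m + 1 by omega, show ¬ n - 1 < j + m by omega, show n - 1 ≠ j + m by omega,
          show ¬ n - 1 < j by omega, show n - 1 ≠ j by omega]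
  | arr A B ihA ihB => simp [tsubst, ihA, ihB]
  | all A ih => simpa [tsubst, Nat.add_right_comm j 1 m] using ih (j + 1)

theorem mem_tfv_tlift {n d : ℕ} {A : Ty} (h : n < d) (hn : n ∈ tfv A) : n ∈ tfv (tlift d A) := by
  induction A generalizing n d with
  | var m => simp_all [tfv, tlift]
  | arr A B ihA ihB => exact hn.imp (ihA h) (ihB h)
  | all A ih => exact ih (Nat.succ_lt_succ h) hn

theorem mem_tfv_tsubst {n k : ℕ} {A : Ty} (G : Ty) (h : n < k) (hn : n ∈ tfv A) :
    n ∈ tfv (tsubst A k G) := by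
  induction A generalizing n k with
  | var m => simp_all [tfv, tsubst]
  | arr A B ihA ihB => exact hn.imp (ihA h) (ihB h)
  | all A ih => exact ih (Nat.succ_lt_succ h) hn

theorem Proper.tlift {A : Ty} (hA : A.Proper) (d : ℕ) : (A.tlift d).Proper := by
  induction A generalizing d with
  | var n => unfold Ty.tlift; split_ifs <;> trivial
  | arr A B ihA ihB => exact ⟨ihA hA.1 d, ihB hA.2 d⟩
  | all A ih => exact ⟨ih hA.1 _, mem_tfv_tlift (Nat.succ_pos d) hA.2⟩

theorem Proper.tliftTimes {A : Ty} (hA : A.Proper) (k : ℕ) : (A.tliftTimes k).Proper := by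
  induction k with
  | zero => exact hA
  | succ k ih => rw [tliftTimes_succ]; exact ih.tlift 0

theorem Proper.tsubst {A G : Ty} (hA : A.Proper) (hG : G.Proper) (k : ℕ) :
    (A.tsubst k G).Proper := by
  induction A generalizing k with
  | var n => unfold Ty.tsubst; split_ifs; exacts [trivial, hG.tliftTimes k, trivial]
  | arr A B ihA ihB => exact ⟨ihA hA.1 k, ihB hA.2 k⟩
  | all A ih => exact ⟨ih hA.1 _, mem_tfv_tsubst G (Nat.succ_pos k) hA.2⟩

theorem tlift_zero_ne_var_zero (A : Ty) : A.tlift 0 ≠ var 0 := by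
  cases A <;> simp [tlift]

theorem eq_var_zero_of_tsubst_succ {A G : Ty} {k : ℕ} (h : A.tsubst (k + 1) G = var 0) :
    A = var 0 := by
  cases A with
  | var n =>
    unfold tsubst at h
    split_ifs at h with h1 h2
    · exact h
    · rw [tliftTimes_succ] at h
      exact absurd h (tlift_zero_ne_var_zero _)
    · simp only [var.injEq] at h
      omega
  | arr => simp [tsubst] at h
  | all => simp [tsubst] at h

end Ty

theorem Typing.tsubst {Γ : List Ty} {t : Trm} {A G : Ty} (h : Typing Γ t A) (hG : G.Proper)
    (k : ℕ) : Typing (Γ.map (·.tsubst k G)) t (A.tsubst k G) := by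
  induction h generalizing k with
  | ax hn hΓ =>
    refine .ax (by simp [hn]) ?_
    simp only [List.mem_map]
    rintro _ ⟨C, hC, rfl⟩
    exact (hΓ C hC).tsubst hG k
  | arrI hA _ ih => exact .arrI (hA.tsubst hG k) (ih k)
  | arrE _ _ ihu ihv => exact .arrE (ihu k) (ihv k)
  | @allI Γ A t hA _ ih =>
    refine .allI (Ty.mem_tfv_tsubst G k.succ_pos hA) ?_
    have hΓ : (Γ.map (Ty.tlift 0)).map (·.tsubst (k + 1) G) =
        (Γ.map (·.tsubst k G)).map (Ty.tlift 0) := by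
      simp only [List.map_map]
      exact List.map_congr_left fun C _ => C.tsubst_tlift G (Nat.zero_le k)
    simpa only [hΓ] using ih (k + 1)
  | @allE Γ A t G' hG' hA _ ih =>
    have hAG := Ty.tsubst_tsubst A 0 k G' G
    rw [Nat.zero_add] at hAG
    rw [hAG]
    exact .allE (G'.tsubst k G) (hG'.tsubst hG k) (Ty.mem_tfv_tsubst G k.succ_pos hA) (ih k)

namespace Ty

def substSeq (σ : List (ℕ × Ty)) (A : Ty) : Ty := σ.foldl (fun A p => A.tsubst p.1 p.2) A

def shiftSeq (σ : List (ℕ × Ty)) : List (ℕ × Ty) := σ.map fun p => (p.1 + 1, p.2)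

variable (σ : List (ℕ × Ty))

@[simp] theorem substSeq_nil : substSeq [] = id := rfl

@[simp] theorem substSeq_cons (p : ℕ × Ty) (A : Ty) :
    substSeq (p :: σ) A = substSeq σ (A.tsubst p.1 p.2) := rfl

theorem substSeq_append_singleton (p : ℕ × Ty) (A : Ty) :
    substSeq (σ ++ [p]) A = (substSeq σ A).tsubst p.1 p.2 := by
  simp [substSeq, List.foldl_append]

theorem substSeq_arr (A B : Ty) : substSeq σ (arr A B) = arr (substSeq σ A) (substSeq σ B) := by
  induction σ generalizing A B with
  | nil => rfl
  | cons p σ ih => exact ih _ _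

theorem substSeq_all (A : Ty) : substSeq σ (all A) = all (substSeq (shiftSeq σ) A) := by
  induction σ generalizing A with
  | nil => rfl
  | cons p σ ih => exact ih _

theorem substSeq_tsubst_zero (A G : Ty) :
    substSeq σ (A.tsubst 0 G) = (substSeq (shiftSeq σ) A).tsubst 0 (substSeq σ G) := by
  induction σ generalizing A G with
  | nil => rfl
  | cons p σ ih =>
    have := tsubst_tsubst A 0 p.1 G p.2
    rw [Nat.zero_add] at this
    rw [substSeq_cons, this]
    exact ih _ _

theorem substSeq_shiftSeq_tlift_zero (A : Ty) :
    substSeq (shiftSeq σ) (tlift 0 A) = tlift 0 (substSeq σ A) := by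
  induction σ generalizing A with
  | nil => rfl
  | cons p σ ih => simpa [shiftSeq, tsubst_tlift A p.2 (Nat.zero_le p.1)] using ih _

theorem mem_tfv_substSeq_shiftSeq {A : Ty} (h : 0 ∈ tfv A) : 0 ∈ tfv (substSeq (shiftSeq σ) A) := by
  induction σ generalizing A with
  | nil => exact h
  | cons p σ ih => exact ih (mem_tfv_tsubst p.2 p.1.succ_pos h)

variable {σ}

theorem Proper.substSeq (hσ : ∀ p ∈ σ, p.2.Proper) {A : Ty} (hA : A.Proper) :
    (substSeq σ A).Proper := by
  induction σ generalizing A with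
  | nil => exact hA
  | cons p σ ih =>
    exact ih (fun q hq => hσ q (List.mem_cons_of_mem _ hq)) (hA.tsubst (hσ p List.mem_cons_self) _)

inductive Inst : Ty → Ty → Prop
  | refl (A : Ty) : Inst A A
  | step {A G B : Ty} : 0 ∈ A.tfv → G.Proper → Inst (A.tsubst 0 G) B → Inst (.all A) B

end Ty

theorem Typing.substSeq {σ : List (ℕ × Ty)} (hσ : ∀ p ∈ σ, p.2.Proper) {Γ : List Ty} {t : Trm}
    {A : Ty} (h : Typing Γ t A) : Typing (Γ.map (Ty.substSeq σ)) t (Ty.substSeq σ A) := by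
  induction σ generalizing Γ A with
  | nil => simpa using h
  | cons p σ ih =>
    rw [show Ty.substSeq (p :: σ) = Ty.substSeq σ ∘ (·.tsubst p.1 p.2) from rfl, ← List.map_map]
    exact ih (fun q hq => hσ q (List.mem_cons_of_mem _ hq)) (h.tsubst (hσ p List.mem_cons_self) p.1)

/- The quantification over `σ` makes the induction go through the rule (∀i): the premise is typed
in the lifted context, and the instantiation of the bound variable is pushed into `σ`. -/
theorem Typing.lam_inv_of_inst {Γ : List Ty} {u : Trm} {F : Ty} (h : Typing Γ (.lam u) F)
    {σ : List (ℕ × Ty)} (hσ : ∀ p ∈ σ, p.2.Proper) {P Q : Ty}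
    (hF : (Ty.substSeq σ F).Inst (.arr P Q)) : Typing (P :: Γ.map (Ty.substSeq σ)) u Q := by
  generalize ht : Trm.lam u = t at h
  induction h generalizing σ with
  | ax => cases ht
  | arrE => cases ht
  | arrI _ hB =>
    cases ht
    rw [Ty.substSeq_arr] at hF
    cases hF
    exact hB.substSeq hσ
  | @allI Γ A t _ _ ih =>
    rw [Ty.substSeq_all] at hF
    obtain _ | @⟨_, G, _, -, hG, hF⟩ := hF
    rw [← Ty.substSeq_append_singleton (p := (0, G))] at hF
    have hσ' : ∀ p ∈ Ty.shiftSeq σ ++ [(0, G)], p.2.Proper := by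
      simp only [List.mem_append, List.mem_singleton, Ty.shiftSeq, List.mem_map]
      rintro _ (⟨p, hp, rfl⟩ | rfl)
      exacts [hσ p hp, hG]
    have hΓ : (Γ.map (Ty.tlift 0)).map (Ty.substSeq (Ty.shiftSeq σ ++ [(0, G)])) =
        Γ.map (Ty.substSeq σ) := by
      simp only [List.map_map]
      refine List.map_congr_left fun C _ => ?_
      simp only [Function.comp_apply, Ty.substSeq_append_singleton,
        Ty.substSeq_shiftSeq_tlift_zero, Ty.tsubst_tlift_self]
    simpa only [hΓ] using ih hσ' hF ht
  | allE G hG hA _ ih =>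
    rw [Ty.substSeq_tsubst_zero] at hF
    refine ih hσ ?_ ht
    rw [Ty.substSeq_all]
    exact .step (Ty.mem_tfv_substSeq_shiftSeq σ hA) (hG.substSeq hσ) hF

theorem Typing.lam_inv {Γ : List Ty} {u : Trm} {F P Q : Ty} (h : Typing Γ (.lam u) F)
    (hF : F.Inst (.arr P Q)) : Typing (P :: Γ) u Q := by
  simpa using h.lam_inv_of_inst (σ := []) (by simp) hF

/- `∀X X` must be excluded too, since it instantiates to a variable. The invariant survives (∀e) as,
for `0 ∈ tfv A`, the instance `A[G]` is a variable or `∀X X` only when `A` is the variable `X`. -/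
theorem Typing.lam_type_ne {Γ : List Ty} {u : Trm} {F : Ty} (h : Typing Γ (.lam u) F) :
    (∀ c, F ≠ .var c) ∧ F ≠ .all (.var 0) := by
  generalize ht : Trm.lam u = t at h
  induction h with
  | ax => cases ht
  | arrE => cases ht
  | arrI => simp
  | allI _ _ ih => simpa using (ih ht).1 0
  | @allE Γ A t G _ hA _ ih =>
    have hA0 : A ≠ .var 0 := fun e => (ih ht).2 (by rw [e])
    cases A with
    | var n => simp_all [Ty.tfv]
    | arr => simp [Ty.tsubst]
    | all A =>
      refine ⟨by simp [Ty.tsubst], fun e => ?_⟩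
      simp only [Ty.tsubst, Ty.all.injEq] at e
      rw [Ty.eq_var_zero_of_tsubst_succ e] at hA
      simp [Ty.tfv] at hA

inductive Trm.Neutral : Trm → Prop
  | var (n : ℕ) : Neutral (.var n)
  | app {a b : Trm} : Neutral a → Neutral (.app a b)

theorem BetaNormal.of_lam {u : Trm} (h : BetaNormal (.lam u)) : BetaNormal u :=
  fun _ hw => h _ (.lam hw)

theorem BetaNormal.neutral_or_eq_lam {t : Trm} (h : BetaNormal t) :
    t.Neutral ∨ ∃ u, t = .lam u := by
  induction t with
  | var n => exact .inl (.var n)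
  | app a b iha =>
    rcases iha fun _ hw => h _ (.appL hw) with ha | ⟨u, rfl⟩
    · exact .inl (.app ha)
    · exact absurd .beta (h _)
  | lam u => exact .inr ⟨u, rfl⟩

theorem Typing.eq_var_of_neutral {Γ : List Ty} {t : Trm} {F : Ty} (h : Typing Γ t F)
    (ht : t.Neutral) (hΓ : ∀ C ∈ Γ, ∃ c, C = .var c) : ∃ n, t = .var n ∧ Γ[n]? = some F := by
  induction h with
  | ax hn => exact ⟨_, rfl, hn⟩
  | arrI => cases ht
  | arrE _ _ iha =>
    obtain ⟨n, -, hn⟩ := iha (by cases ht; assumption) hΓ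
    obtain ⟨c, hc⟩ := hΓ _ (List.mem_of_getElem? hn)
    cases hc
  | @allI Γ A t hA _ ih =>
    have hΓ' : ∀ C ∈ Γ.map (Ty.tlift 0), ∃ c, C = .var c := by
      simp only [List.mem_map]
      rintro _ ⟨C, hC, rfl⟩
      obtain ⟨c, rfl⟩ := hΓ C hC
      exact ⟨c + 1, rfl⟩
    obtain ⟨n, -, hn⟩ := ih ht hΓ'
    rw [List.getElem?_map, Option.map_eq_some_iff] at hn
    obtain ⟨C, hC, rfl⟩ := hn
    obtain ⟨c, rfl⟩ := hΓ C (List.mem_of_getElem? hC)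
    simp [Ty.tlift, Ty.tfv] at hA
  | allE _ _ _ _ ih =>
    obtain ⟨n, -, hn⟩ := ih ht hΓ
    obtain ⟨c, hc⟩ := hΓ _ (List.mem_of_getElem? hn)
    cases hc

theorem typing_lam_lam_var_bool {i : ℕ} (hi : i < 2) :
    Typing [] (.lam (.lam (.var i))) Bool' := by
  refine .allI (by simp [Ty.tfv]) (.arrI trivial (.arrI trivial (.ax ?_ (by simp [Ty.Proper]))))
  interval_cases i <;> rfl

/-- for β-normal t, ⊢_F t : Bool iff t = λx λy y or t = λx λy x. -/
theorem stmt6 (t : Trm) (hn : BetaNormal t) :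
    Typing [] t Bool' ↔ t = .lam (.lam (.var 0)) ∨ t = .lam (.lam (.var 1)) := by
  refine ⟨fun h => ?_, by rintro (rfl | rfl) <;> exact typing_lam_lam_var_bool (by norm_num)⟩
  rcases hn.neutral_or_eq_lam with ht | ⟨u, rfl⟩
  · obtain ⟨n, -, hget⟩ := h.eq_var_of_neutral ht (by simp)
    simp at hget
  have hu : Typing [.var 0] u (.arr (.var 0) (.var 0)) :=
    h.lam_inv (.step (G := .var 0) (by simp [Ty.tfv]) trivial (.refl _))
  rcases hn.of_lam.neutral_or_eq_lam with hu' | ⟨w, rfl⟩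
  · obtain ⟨n, -, hget⟩ := hu.eq_var_of_neutral hu' (by simp)
    cases n <;> simp at hget
  have hw : Typing [.var 0, .var 0] w (.var 0) := hu.lam_inv (.refl _)
  rcases hn.of_lam.of_lam.neutral_or_eq_lam with hw' | ⟨v, rfl⟩
  · obtain ⟨i, rfl, hget⟩ := hw.eq_var_of_neutral hw' (by simp)
    have : i < 2 := (List.getElem?_eq_some_iff.mp hget).1
    interval_cases i <;> simp
  · exact absurd rfl (hw.lam_type_ne.1 0)
end
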